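/- arXiv:1307.4267 — 2 statements merged into one kernel-verified Lean document; each statement's English description precedes it below -/
import Mathlib

section
/- Define J(y) = ∑_{k=1}^{N+2} (p(k)/2)(Δ²y(k-2))² − ∑_{k=1}^{N+1} (q(k)/2)(Δy(k-1))² + ∑_{k=1}^{N} F(k,y(k)) on the space E of functions y : Z[-1,N+2] → ℝ with zero boundary values, where F(k,s) = ∫₀ˢ f(k,t)dt. Then y₀ ∈ E is a critical point of J (i.e., the Gateaux derivative δJ(y₀;h) vanishes for all h ∈ E) if and only if y₀ solves Δ²(p(k)Δ²y₀(k-2)) + Δ(q(k)Δy₀(k-1)) + f(k,y₀(k)) = 0 for all k ∈ Z[1,N]. -/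
open Finset

/-- Forward difference `Δy(k) = y(k+1) - y(k)`. -/
def fd (y : ℤ → ℝ) (k : ℤ) : ℝ := y (k + 1) - y k

/-- Second forward difference `Δ²y(k) = y(k+2) - 2y(k+1) + y(k)`. -/
def fd2 (y : ℤ → ℝ) (k : ℤ) : ℝ := y (k + 2) - 2 * y (k + 1) + y k

/-- Dirichlet boundary conditions `y(-1) = y(0) = y(N+1) = y(N+2) = 0`. -/
def bc (N : ℕ) (y : ℤ → ℝ) : Prop :=
  y (-1) = 0 ∧ y 0 = 0 ∧ y ((N : ℤ) + 1) = 0 ∧ y ((N : ℤ) + 2) = 0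

/-- `y` satisfies `Δ²(p(k)Δ²y(k-2)) + Δ(q(k)Δy(k-1)) + f(k,y(k)) = 0` for `k ∈ Z[1,N]`. -/
def solves (N : ℕ) (p q : ℤ → ℝ) (f : ℤ → ℝ → ℝ) (y : ℤ → ℝ) : Prop :=
  ∀ k ∈ Finset.Icc (1 : ℤ) (N : ℤ),
    fd2 (fun j => p j * fd2 y (j - 2)) k
      + fd (fun j => q j * fd y (j - 1)) k + f k (y k) = 0

/-- `F(k,s) = ∫₀ˢ f(k,t) dt`. -/
noncomputable def Fint (f : ℤ → ℝ → ℝ) (k : ℤ) (s : ℝ) : ℝ := ∫ t in (0 : ℝ)..s, f k t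

/-- The energy functional
`J(y) = ∑_{k=1}^{N+2} (p(k)/2)(Δ²y(k-2))² − ∑_{k=1}^{N+1} (q(k)/2)(Δy(k-1))² + ∑_{k=1}^{N} F(k,y(k))`. -/
noncomputable def J (N : ℕ) (p q : ℤ → ℝ) (f : ℤ → ℝ → ℝ) (y : ℤ → ℝ) : ℝ :=
  ∑ k ∈ Finset.Icc (1 : ℤ) ((N : ℤ) + 2), p k / 2 * (fd2 y (k - 2)) ^ 2
    - ∑ k ∈ Finset.Icc (1 : ℤ) ((N : ℤ) + 1), q k / 2 * (fd y (k - 1)) ^ 2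
    + ∑ k ∈ Finset.Icc (1 : ℤ) (N : ℤ), Fint f k (y k)

/-
Differentiating `J` along the line `y₀ + ε h` gives the first variation, bilinear in the
differences of `y₀` and `h`. Summing by parts twice in the fourth-order term and once in the
second-order term moves every difference onto `y₀`, and the zero boundary values of `h` kill the
boundary terms. So the first variation is `∑ₖ L(y₀)(k) h(k)`, where `L = eulerLagrange` is the
left-hand side of the equation, and testing with the unit vectors `h = δₖ` shows that it vanishes
for all `h` iff `L(y₀) = 0`.
-/

lemma sum_Icc_add_right {M : Type*} [AddCommMonoid M] (F : ℤ → M) (a b c : ℤ) :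
    ∑ k ∈ Icc (a + c) (b + c), F k = ∑ k ∈ Icc a b, F (k + c) := by
  rw [← map_add_right_Icc, sum_map]
  rfl

lemma sum_Icc_eq_of_eq_zero {M : Type*} [AddCommMonoid M] {F : ℤ → M} {a b a' b' : ℤ}
    (ha : a' ≤ a) (hb : b ≤ b') (hF : ∀ k, (a' ≤ k ∧ k < a) ∨ (b < k ∧ k ≤ b') → F k = 0) :
    ∑ k ∈ Icc a' b', F k = ∑ k ∈ Icc a b, F k :=
  (sum_subset (Icc_subset_Icc ha hb) fun k hk hk' =>
    hF k (by simp only [mem_Icc] at hk hk'; omega)).symm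

lemma fd_fd (y : ℤ → ℝ) (k : ℤ) : fd (fd y) k = fd2 y k := by
  simp only [fd, fd2]
  ring_nf

lemma sum_mul_fd_sub_one (w : ℤ → ℝ) {h : ℤ → ℝ} {m n : ℤ} (hm : h (m - 1) = 0)
    (hn : h (n + 1) = 0) :
    ∑ k ∈ Icc m (n + 1), w k * fd h (k - 1) = -∑ k ∈ Icc m n, fd w k * h k := by
  have hcur : ∑ k ∈ Icc m (n + 1), w k * h k = ∑ k ∈ Icc m n, w k * h k :=
    sum_Icc_eq_of_eq_zero le_rfl (by omega) fun k hk => by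
      rw [show k = n + 1 by omega, hn, mul_zero]
  have hprev : ∑ k ∈ Icc m (n + 1), w k * h (k - 1) = ∑ k ∈ Icc m n, w (k + 1) * h k := by
    rw [← sub_add_cancel m 1, sum_Icc_add_right, sub_add_cancel]
    simp only [add_sub_cancel_right]
    exact sum_Icc_eq_of_eq_zero (by omega) le_rfl fun k hk => by
      rw [show k = m - 1 by omega, hm, mul_zero]
  simp only [fd, sub_add_cancel, mul_sub, sum_sub_distrib, hcur, hprev, ← sum_neg_distrib]
  rw [← sum_sub_distrib]
  exact sum_congr rfl fun k _ => by ring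

lemma sum_mul_fd2_sub_two (g : ℤ → ℝ) {h : ℤ → ℝ} {m n : ℤ} (hm₂ : h (m - 2) = 0)
    (hm₁ : h (m - 1) = 0) (hn₁ : h (n + 1) = 0) (hn₂ : h (n + 2) = 0) :
    ∑ k ∈ Icc m (n + 2), g k * fd2 h (k - 2) = ∑ k ∈ Icc m n, fd2 g k * h k := by
  have hsplit : ∀ k, fd2 h (k - 2) = fd (fun j => fd h (j - 1)) (k - 1) := fun k => by
    simp only [fd, fd2]
    ring_nf
  calc ∑ k ∈ Icc m (n + 2), g k * fd2 h (k - 2)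
      = ∑ k ∈ Icc m (n + 1 + 1), g k * fd (fun j => fd h (j - 1)) (k - 1) := by
        simp only [hsplit, add_assoc, one_add_one_eq_two]
    _ = -∑ k ∈ Icc m (n + 1), fd g k * fd h (k - 1) := by
        refine sum_mul_fd_sub_one g ?_ ?_
        · rw [fd, show m - 1 - 1 + 1 = m - 1 by ring, show m - 1 - 1 = m - 2 by ring, hm₁, hm₂,
            sub_zero]
        · rw [fd, show n + 1 + 1 - 1 + 1 = n + 2 by ring, show n + 1 + 1 - 1 = n + 1 by ring, hn₁,
            hn₂, sub_zero]
    _ = ∑ k ∈ Icc m n, fd2 g k * h k := by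
        rw [sum_mul_fd_sub_one _ hm₁ hn₁, neg_neg]
        simp only [fd_fd]

lemma fd_add_mul (y h : ℤ → ℝ) (ε : ℝ) (k : ℤ) :
    fd (fun j => y j + ε * h j) k = fd y k + ε * fd h k := by
  simp only [fd]
  ring

lemma fd2_add_mul (y h : ℤ → ℝ) (ε : ℝ) (k : ℤ) :
    fd2 (fun j => y j + ε * h j) k = fd2 y k + ε * fd2 h k := by
  simp only [fd2]
  ring

lemma hasDerivAt_add_mul (a b : ℝ) : HasDerivAt (fun ε : ℝ => a + ε * b) b 0 := by
  simpa using ((hasDerivAt_id (0 : ℝ)).mul_const b).const_add a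

lemma hasDerivAt_half_mul_sq (c a b : ℝ) :
    HasDerivAt (fun ε : ℝ => c / 2 * (a + ε * b) ^ 2) (c * (a * b)) 0 := by
  refine (((hasDerivAt_add_mul a b).fun_pow 2).const_mul (c / 2)).congr_deriv ?_
  push_cast
  ring

lemma hasDerivAt_Fint {f : ℤ → ℝ → ℝ} {k : ℤ} (hf : Continuous (f k)) (a b : ℝ) :
    HasDerivAt (fun ε : ℝ => Fint f k (a + ε * b)) (f k a * b) 0 := by
  have hF : HasDerivAt (fun s => ∫ t in (0 : ℝ)..s, f k t) (f k a) (a + 0 * b) := by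
    simpa using intervalIntegral.integral_hasDerivAt_right (hf.intervalIntegrable _ _)
      hf.stronglyMeasurable.stronglyMeasurableAtFilter hf.continuousAt
  exact hF.comp (0 : ℝ) (hasDerivAt_add_mul a b)

noncomputable def firstVariation (N : ℕ) (p q : ℤ → ℝ) (f : ℤ → ℝ → ℝ) (y h : ℤ → ℝ) : ℝ :=
  ∑ k ∈ Icc (1 : ℤ) ((N : ℤ) + 2), p k * (fd2 y (k - 2) * fd2 h (k - 2))
    - ∑ k ∈ Icc (1 : ℤ) ((N : ℤ) + 1), q k * (fd y (k - 1) * fd h (k - 1))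
    + ∑ k ∈ Icc (1 : ℤ) (N : ℤ), f k (y k) * h k

def eulerLagrange (p q : ℤ → ℝ) (f : ℤ → ℝ → ℝ) (y : ℤ → ℝ) (k : ℤ) : ℝ :=
  fd2 (fun j => p j * fd2 y (j - 2)) k + fd (fun j => q j * fd y (j - 1)) k + f k (y k)

lemma hasDerivAt_J_line {N : ℕ} (p q : ℤ → ℝ) {f : ℤ → ℝ → ℝ}
    (hf : ∀ k ∈ Icc (1 : ℤ) (N : ℤ), Continuous (f k)) (y h : ℤ → ℝ) :
    HasDerivAt (fun ε : ℝ => J N p q f (fun k => y k + ε * h k))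
      (firstVariation N p q f y h) 0 := by
  simp only [J, fd_add_mul, fd2_add_mul]
  exact ((HasDerivAt.fun_sum fun k _ => hasDerivAt_half_mul_sq _ _ _).sub
    (HasDerivAt.fun_sum fun k _ => hasDerivAt_half_mul_sq _ _ _)).add
    (HasDerivAt.fun_sum fun k hk => hasDerivAt_Fint (hf k hk) _ _)

lemma firstVariation_eq_sum_eulerLagrange_mul {N : ℕ} (p q : ℤ → ℝ) (f : ℤ → ℝ → ℝ)
    (y : ℤ → ℝ) {h : ℤ → ℝ} (hh : bc N h) :
    firstVariation N p q f y h = ∑ k ∈ Icc (1 : ℤ) (N : ℤ), eulerLagrange p q f y k * h k := by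
  obtain ⟨hneg₁, h₀, hN₁, hN₂⟩ := hh
  have hp := sum_mul_fd2_sub_two (fun j => p j * fd2 y (j - 2)) (m := 1) (n := (N : ℤ))
    (by norm_num [hneg₁]) (by norm_num [h₀]) hN₁ hN₂
  have hq := sum_mul_fd_sub_one (fun j => q j * fd y (j - 1)) (m := 1) (n := (N : ℤ))
    (by norm_num [h₀]) hN₁
  simp only [mul_assoc] at hp hq
  rw [firstVariation, hp, hq, sub_neg_eq_add, ← sum_add_distrib, ← sum_add_distrib]
  exact sum_congr rfl fun k _ => by rw [eulerLagrange]; ring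

lemma bc_single {N : ℕ} {k : ℤ} (hk : k ∈ Icc 1 (N : ℤ)) : bc N (Pi.single k 1) := by
  rw [mem_Icc] at hk
  refine ⟨?_, ?_, ?_, ?_⟩ <;> exact Pi.single_eq_of_ne (by omega) _

lemma forall_bc_sum_mul_eq_zero_iff (N : ℕ) (r : ℤ → ℝ) :
    (∀ h, bc N h → ∑ k ∈ Icc 1 (N : ℤ), r k * h k = 0) ↔ ∀ k ∈ Icc 1 (N : ℤ), r k = 0 := by
  refine ⟨fun H k hk => ?_, fun H h _ => sum_eq_zero fun k hk => by rw [H k hk, zero_mul]⟩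
  simpa [Pi.single_apply, hk] using H _ (bc_single hk)

theorem stmt_7_general (N : ℕ) (p q : ℤ → ℝ) (f : ℤ → ℝ → ℝ)
    (hf : ∀ k ∈ Finset.Icc (1 : ℤ) (N : ℤ), Continuous (f k))
    (y₀ : ℤ → ℝ) :
    (∀ h : ℤ → ℝ, bc N h →
        HasDerivAt (fun ε : ℝ => J N p q f (fun k => y₀ k + ε * h k)) 0 0)
      ↔ solves N p q f y₀ := by
  calc (∀ h : ℤ → ℝ, bc N h →
        HasDerivAt (fun ε : ℝ => J N p q f (fun k => y₀ k + ε * h k)) 0 0)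
      ↔ ∀ h : ℤ → ℝ, bc N h → firstVariation N p q f y₀ h = 0 :=
        forall₂_congr fun h _ => ⟨(hasDerivAt_J_line p q hf y₀ h).unique,
          fun H => H ▸ hasDerivAt_J_line p q hf y₀ h⟩
    _ ↔ ∀ h : ℤ → ℝ, bc N h → ∑ k ∈ Icc 1 (N : ℤ), eulerLagrange p q f y₀ k * h k = 0 :=
        forall₂_congr fun h hh => by rw [firstVariation_eq_sum_eulerLagrange_mul p q f y₀ hh]
    _ ↔ solves N p q f y₀ := forall_bc_sum_mul_eq_zero_iff N _

/-- A function `y₀ ∈ E` is a critical point of `J` (the Gateaux derivative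
`δJ(y₀;h)` vanishes for every direction `h ∈ E`) iff `y₀` solves the BVP. -/
theorem stmt_7 (N : ℕ) (hN : 1 ≤ N) (p q : ℤ → ℝ) (f : ℤ → ℝ → ℝ)
    (hf : ∀ k ∈ Finset.Icc (1 : ℤ) (N : ℤ), Continuous (f k))
    (y₀ : ℤ → ℝ) (hy₀ : bc N y₀) :
    (∀ h : ℤ → ℝ, bc N h →
        HasDerivAt (fun ε : ℝ => J N p q f (fun k => y₀ k + ε * h k)) 0 0)
      ↔ solves N p q f y₀ :=
  stmt_7_general N p q f hf y₀
end

section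
/- Suppose there exists m > 0 such that s·f(k,s) ≥ 0 for all |s| ≥ m and k ∈ Z[1,N], and suppose η'(p)·p_min − η(q)·q_max > 0. Then the functional J(y) = ∑_{k=1}^{N+2}(p(k)/2)(Δ²y(k-2))² − ∑_{k=1}^{N+1}(q(k)/2)(Δy(k-1))² + ∑_{k=1}^{N}F(k,y(k)) is coercive on E, i.e., J(y) → +∞ as ‖y‖ → ∞, and the boundary value problem Δ²(p(k)Δ²y(k-2)) + Δ(q(k)Δy(k-1)) + f(k,y(k)) = 0, y(-1)=y(0)=y(N+1)=y(N+2)=0, has at least one solution. -/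
open Finset Matrix

/-- The (N+1)×N first-difference matrix under zero boundary conditions. -/
def Vmat (N : ℕ) : Matrix (Fin (N + 1)) (Fin N) ℝ := fun i j =>
  if (i : ℕ) = (j : ℕ) then 1 else if (i : ℕ) = (j : ℕ) + 1 then -1 else 0

/-- The (N+2)×N second-difference matrix under zero boundary conditions. -/
def Wmat (N : ℕ) : Matrix (Fin (N + 2)) (Fin N) ℝ := fun i j =>
  if (i : ℕ) = (j : ℕ) then 1
  else if (i : ℕ) = (j : ℕ) + 1 then -2
  else if (i : ℕ) = (j : ℕ) + 2 then 1 else 0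

/-- `lam` is the smallest eigenvalue of the matrix `M`. -/
def IsSmallestEigenvalue {n : ℕ} (M : Matrix (Fin n) (Fin n) ℝ) (lam : ℝ) : Prop :=
  IsLeast {μ : ℝ | ∃ x : Fin n → ℝ, x ≠ 0 ∧ M.mulVec x = μ • x} lam

/-!
Identify `E` with `ℝ^N`. With zero boundary values, the two difference sums in `J` are
`‖V x‖² = xᵀ(VᵀV)x` and `‖W x‖² = xᵀ(WᵀW)x`; they lie between `λ₁‖x‖²` and `4‖x‖²`, resp.
`λ₂‖x‖²` and `16‖x‖²`, the upper bounds coming from `(a - b)² ≤ 2a² + 2b²` and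
`(a - 2b + c)² ≤ 4a² + 8b² + 4c²`. Choosing the bound according to the signs of `p_min` and
`q_max` gives `J(y) ≥ (η'(p) p_min - η(q) q_max) ‖y‖² / 2 - C`, because the sign condition on `f`
makes each `F(k, ·)` bounded below. So `J` is coercive and, being continuous on `ℝ^N`, has a global
minimizer. Differentiating `J` there in the direction of the unit impulse at `k` and summing by
parts gives the difference equation at `k`.
-/

open Filter

theorem sum_Icc_one_eq_sum_fin {M : Type*} [AddCommMonoid M] (n : ℕ) (g : ℤ → M) :
    ∑ k ∈ Icc (1 : ℤ) n, g k = ∑ j : Fin n, g ((j : ℕ) + 1) := by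
  symm
  refine Finset.sum_bij (fun j _ => ((j : ℕ) : ℤ) + 1) (fun j _ => by simp)
    (fun i _ j _ h => by ext; simpa using h) (fun k hk => ?_) (fun _ _ => rfl)
  rw [mem_Icc] at hk
  exact ⟨⟨(k - 1).toNat, by omega⟩, mem_univ _, by simp; omega⟩

theorem Matrix.IsHermitian.mul_dotProduct_self_le {n : Type*} [Fintype n] [DecidableEq n]
    {M : Matrix n n ℝ} (hM : M.IsHermitian) {lam : ℝ}
    (hlam : lam ∈ lowerBounds {μ : ℝ | ∃ v : n → ℝ, v ≠ 0 ∧ M *ᵥ v = μ • v}) (x : n → ℝ) :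
    lam * (x ⬝ᵥ x) ≤ x ⬝ᵥ (M *ᵥ x) := by
  have hB : (M - lam • 1).IsHermitian := hM.sub (isHermitian_one.smul (IsSelfAdjoint.all lam))
  have hpsd : (M - lam • 1).PosSemidef := by
    refine hB.posSemidef_iff_eigenvalues_nonneg.2 fun i => ?_
    set v := ⇑(hB.eigenvectorBasis i)
    have hv : v ≠ 0 := fun h =>
      hB.eigenvectorBasis.orthonormal.ne_zero i (by ext j; exact congrFun h j)
    have hMv : M *ᵥ v = (hB.eigenvalues i + lam) • v := by
      have := hB.mulVec_eigenvectorBasis i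
      rw [sub_mulVec, smul_mulVec, one_mulVec, sub_eq_iff_eq_add] at this
      rw [this, add_smul]
    simpa using hlam ⟨v, hv, hMv⟩
  have := hpsd.dotProduct_mulVec_nonneg x
  rw [sub_mulVec, smul_mulVec, one_mulVec, dotProduct_sub, dotProduct_smul] at this
  simpa [smul_eq_mul] using this

theorem Matrix.isHermitian_transpose_mul_self {m n : Type*} [Fintype m] (A : Matrix m n ℝ) :
    (Aᵀ * A).IsHermitian := by
  simpa only [conjTranspose_eq_transpose_of_trivial] using isHermitian_conjTranspose_mul_self A

theorem Matrix.dotProduct_transpose_mul_self_mulVec {m n : Type*} [Fintype m] [Fintype n]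
    (A : Matrix m n ℝ) (x : n → ℝ) : x ⬝ᵥ ((Aᵀ * A) *ᵥ x) = (A *ᵥ x) ⬝ᵥ (A *ᵥ x) := by
  rw [← mulVec_mulVec, dotProduct_mulVec, vecMul_transpose]

theorem bddBelow_range_primitive {g : ℝ → ℝ} (hg : Continuous g) {m : ℝ}
    (hsign : ∀ s, m ≤ |s| → 0 ≤ s * g s) :
    BddBelow (Set.range fun s => ∫ t in (0 : ℝ)..s, g t) := by
  set G := fun s => ∫ t in (0 : ℝ)..s, g t
  set M := |m| + 1
  have hM : 0 < M := by positivity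
  have hsign' : ∀ s, M ≤ |s| → 0 ≤ s * g s := fun s hs => hsign s (by linarith [le_abs_self m])
  have hG : ∀ a b, G b - G a = ∫ t in a..b, g t := fun a b =>
    intervalIntegral.integral_interval_sub_left (hg.intervalIntegrable _ _)
      (hg.intervalIntegrable _ _)
  obtain ⟨s₀, -, hs₀⟩ := (isCompact_Icc (a := -M) (b := M)).exists_isMinOn
    (Set.nonempty_Icc.2 (by linarith))
    (intervalIntegral.continuous_primitive (μ := MeasureTheory.volume)
      (fun _ _ => hg.intervalIntegrable _ _) 0).continuousOn
  -- `G` decreases on `(-∞, -M]` and increases on `[M, ∞)`.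
  refine ⟨G s₀, ?_⟩
  rintro _ ⟨s, rfl⟩
  rcases le_or_gt s (-M) with hs | hs
  · have hle : G s₀ ≤ G (-M) := hs₀ ⟨le_rfl, by linarith⟩
    have : G (-M) - G s ≤ 0 := by
      rw [hG, ← intervalIntegral.integral_zero (a := s) (b := -M) (μ := MeasureTheory.volume)]
      refine intervalIntegral.integral_mono_on hs (hg.intervalIntegrable _ _)
        intervalIntegrable_const fun t ht => ?_
      have := hsign' t (by rw [abs_of_neg (by linarith [ht.2])]; linarith [ht.2])
      nlinarith [ht.2]
    linarith
  rcases le_or_gt s M with hs' | hs'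
  · exact hs₀ ⟨hs.le, hs'⟩
  · have hle : G s₀ ≤ G M := hs₀ ⟨by linarith, le_rfl⟩
    have : 0 ≤ G s - G M := by
      rw [hG]
      refine intervalIntegral.integral_nonneg hs'.le fun t ht => ?_
      exact nonneg_of_mul_nonneg_right
        (hsign' t (by rw [abs_of_pos (by linarith [ht.1])]; exact ht.1)) (by linarith [ht.1])
    linarith

theorem exists_le_sum_Fint {f : ℤ → ℝ → ℝ} {S : Finset ℤ} (hf : ∀ k ∈ S, Continuous (f k))
    {m : ℝ} (hsign : ∀ k ∈ S, ∀ s : ℝ, m ≤ |s| → 0 ≤ s * f k s) :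
    ∃ C, ∀ y : ℤ → ℝ, C ≤ ∑ k ∈ S, Fint f k (y k) := by
  have hB : ∀ k, ∃ B, k ∈ S → ∀ s, B ≤ Fint f k s := fun k => by
    by_cases hk : k ∈ S
    · obtain ⟨B, hB⟩ := bddBelow_range_primitive (hf k hk) (hsign k hk)
      exact ⟨B, fun _ s => hB ⟨s, rfl⟩⟩
    · exact ⟨0, fun h => absurd h hk⟩
  choose B hB using hB
  exact ⟨∑ k ∈ S, B k, fun y => sum_le_sum fun k hk => hB k hk (y k)⟩

section DifferenceBounds

theorem sum_sq_comp_add_le {T : Finset ℤ} {y : ℤ → ℝ} (hy : ∀ k ∉ T, y k = 0)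
    (S : Finset ℤ) (c : ℤ) : ∑ k ∈ S, y (k + c) ^ 2 ≤ ∑ k ∈ T, y k ^ 2 :=
  calc ∑ k ∈ S, y (k + c) ^ 2 = ∑ k ∈ S.map (addRightEmbedding c), y k ^ 2 :=
        (sum_map S (addRightEmbedding c) fun k => y k ^ 2).symm
    _ = ∑ k ∈ S.map (addRightEmbedding c) with k ∈ T, y k ^ 2 :=
      (sum_filter_of_ne fun k _ hk => by_contra fun h => hk (by rw [hy k h]; ring)).symm
    _ ≤ ∑ k ∈ T, y k ^ 2 :=
      sum_le_sum_of_subset_of_nonneg (fun k hk => (mem_filter.1 hk).2) fun _ _ _ => sq_nonneg _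

variable {T : Finset ℤ} {y : ℤ → ℝ}

theorem sum_sq_fd_le (hy : ∀ k ∉ T, y k = 0) (S : Finset ℤ) :
    ∑ k ∈ S, fd y (k - 1) ^ 2 ≤ 4 * ∑ k ∈ T, y k ^ 2 := by
  have hpt : ∀ k, fd y (k - 1) ^ 2 ≤ 2 * y (k + 0) ^ 2 + 2 * y (k + -1) ^ 2 := fun k => by
    rw [fd, sub_add_cancel, add_zero, ← sub_eq_add_neg]
    nlinarith [sq_nonneg (y k + y (k - 1))]
  calc ∑ k ∈ S, fd y (k - 1) ^ 2
      ≤ 2 * ∑ k ∈ S, y (k + 0) ^ 2 + 2 * ∑ k ∈ S, y (k + -1) ^ 2 := by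
        rw [mul_sum, mul_sum, ← sum_add_distrib]
        exact sum_le_sum fun k _ => hpt k
    _ ≤ 4 * ∑ k ∈ T, y k ^ 2 := by
        linarith [sum_sq_comp_add_le hy S 0, sum_sq_comp_add_le hy S (-1)]

theorem sum_sq_fd2_le (hy : ∀ k ∉ T, y k = 0) (S : Finset ℤ) :
    ∑ k ∈ S, fd2 y (k - 2) ^ 2 ≤ 16 * ∑ k ∈ T, y k ^ 2 := by
  have hpt : ∀ k, fd2 y (k - 2) ^ 2
      ≤ 4 * y (k + 0) ^ 2 + 8 * y (k + -1) ^ 2 + 4 * y (k + -2) ^ 2 := fun k => by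
    rw [fd2, show k - 2 + 2 = k + 0 by ring, show k - 2 + 1 = k + -1 by ring,
      show k - 2 = k + -2 by ring]
    nlinarith [sq_nonneg (y (k + 0) + y (k + -1)), sq_nonneg (y (k + -1) + y (k + -2)),
      sq_nonneg (y (k + 0) - y (k + -2))]
  calc ∑ k ∈ S, fd2 y (k - 2) ^ 2
      ≤ 4 * ∑ k ∈ S, y (k + 0) ^ 2 + 8 * ∑ k ∈ S, y (k + -1) ^ 2
          + 4 * ∑ k ∈ S, y (k + -2) ^ 2 := by
        rw [mul_sum, mul_sum, mul_sum, ← sum_add_distrib, ← sum_add_distrib]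
        exact sum_le_sum fun k _ => hpt k
    _ ≤ 16 * ∑ k ∈ T, y k ^ 2 := by
        linarith [sum_sq_comp_add_le hy S 0, sum_sq_comp_add_le hy S (-1),
          sum_sq_comp_add_le hy S (-2)]

end DifferenceBounds

theorem ite_nonneg_mul_mul_le {l u t X S : ℝ} (hl : l * X ≤ S) (hu : S ≤ u * X) :
    (if 0 ≤ t then l else u) * t * X ≤ t * S := by
  split_ifs with ht <;> nlinarith

theorem mul_le_ite_neg_mul_mul {l u t X S : ℝ} (hl : l * X ≤ S) (hu : S ≤ u * X) :
    t * S ≤ (if t < 0 then l else u) * t * X := by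
  split_ifs with ht <;> nlinarith

section ZeroExtension

/-- The identification of `ℝ^N` with `E`, inverted on `E` by `interiorValues`. -/
def zeroExtend (N : ℕ) (x : Fin N → ℝ) (k : ℤ) : ℝ :=
  ∑ j : Fin N, if k = (j : ℕ) + 1 then x j else 0

def interiorValues (N : ℕ) (y : ℤ → ℝ) (j : Fin N) : ℝ := y ((j : ℕ) + 1)

variable {N : ℕ}

theorem zeroExtend_natCast_add_one (x : Fin N → ℝ) (j : Fin N) :
    zeroExtend N x ((j : ℕ) + 1) = x j := by
  rw [zeroExtend, Fintype.sum_eq_single j fun i hi => if_neg (by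
    intro h; exact hi (Fin.ext (by omega)))]
  exact if_pos rfl

theorem zeroExtend_of_notMem {x : Fin N → ℝ} {k : ℤ} (hk : k ∉ Icc (1 : ℤ) N) :
    zeroExtend N x k = 0 :=
  sum_eq_zero fun j _ => if_neg fun h => hk (by rw [mem_Icc]; omega)

theorem bc_zeroExtend (x : Fin N → ℝ) : bc N (zeroExtend N x) := by
  refine ⟨?_, ?_, ?_, ?_⟩ <;> exact zeroExtend_of_notMem (by simp)

theorem zeroExtend_interiorValues {y : ℤ → ℝ} (hy : bc N y) {k : ℤ}
    (hk : k ∈ Icc (-1 : ℤ) (N + 2)) : zeroExtend N (interiorValues N y) k = y k := by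
  by_cases hkN : k ∈ Icc (1 : ℤ) N
  · rw [mem_Icc] at hkN
    obtain ⟨j, rfl⟩ : ∃ j : Fin N, ((j : ℕ) : ℤ) + 1 = k :=
      ⟨⟨(k - 1).toNat, by omega⟩, by simp; omega⟩
    exact zeroExtend_natCast_add_one _ j
  · rw [zeroExtend_of_notMem hkN]
    obtain ⟨h₁, h₂, h₃, h₄⟩ := hy
    simp only [mem_Icc] at hk hkN
    obtain rfl | rfl | rfl | rfl : k = -1 ∨ k = 0 ∨ k = N + 1 ∨ k = N + 2 := by omega
    all_goals simp_all

theorem sum_sq_zeroExtend (x : Fin N → ℝ) :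
    ∑ k ∈ Icc (1 : ℤ) N, zeroExtend N x k ^ 2 = ∑ j, x j ^ 2 := by
  simp only [sum_Icc_one_eq_sum_fin, zeroExtend_natCast_add_one]

theorem continuous_zeroExtend_apply (k : ℤ) :
    Continuous fun x : EuclideanSpace ℝ (Fin N) => zeroExtend N x k := by
  refine continuous_finsetSum _ fun j _ => ?_
  split_ifs <;> fun_prop

end ZeroExtension

section DifferenceMatrices

variable {N : ℕ}

theorem Vmat_mulVec (x : Fin N → ℝ) (i : Fin (N + 1)) :
    (Vmat N *ᵥ x) i = fd (zeroExtend N x) i := by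
  simp only [mulVec, dotProduct, fd, zeroExtend, ← sum_sub_distrib]
  refine sum_congr rfl fun j _ => ?_
  simp only [Vmat]
  split_ifs <;> first | ring1 | omega

theorem Wmat_mulVec (x : Fin N → ℝ) (i : Fin (N + 2)) :
    (Wmat N *ᵥ x) i = fd2 (zeroExtend N x) ((i : ℕ) - 1) := by
  simp only [mulVec, dotProduct, fd2, zeroExtend, mul_sum, ← sum_sub_distrib, ← sum_add_distrib]
  refine sum_congr rfl fun j _ => ?_
  simp only [Wmat]
  split_ifs <;> first | ring1 | omega

theorem sum_sq_fd_zeroExtend (x : Fin N → ℝ) :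
    ∑ k ∈ Icc (1 : ℤ) (N + 1), fd (zeroExtend N x) (k - 1) ^ 2
      = x ⬝ᵥ (((Vmat N)ᵀ * Vmat N) *ᵥ x) := by
  rw [dotProduct_transpose_mul_self_mulVec, dotProduct, ← Nat.cast_add_one,
    sum_Icc_one_eq_sum_fin]
  simp [Vmat_mulVec, sq]

theorem sum_sq_fd2_zeroExtend (x : Fin N → ℝ) :
    ∑ k ∈ Icc (1 : ℤ) (N + 2), fd2 (zeroExtend N x) (k - 2) ^ 2
      = x ⬝ᵥ (((Wmat N)ᵀ * Wmat N) *ᵥ x) := by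
  have h : ((N : ℤ) + 2) = ((N + 2 : ℕ) : ℤ) := by push_cast; rfl
  rw [dotProduct_transpose_mul_self_mulVec, dotProduct, h, sum_Icc_one_eq_sum_fin]
  refine sum_congr rfl fun i _ => ?_
  rw [Wmat_mulVec, ← sq]
  congr 2
  ring

end DifferenceMatrices

section ZeroExtensionBounds

variable {N : ℕ}

theorem mul_sum_sq_le_sum_sq_fd_zeroExtend {lam : ℝ}
    (hlam : IsSmallestEigenvalue ((Vmat N)ᵀ * Vmat N) lam) (x : Fin N → ℝ) :
    lam * ∑ j, x j ^ 2 ≤ ∑ k ∈ Icc (1 : ℤ) (N + 1), fd (zeroExtend N x) (k - 1) ^ 2 := by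
  simpa only [sum_sq_fd_zeroExtend, dotProduct, ← sq] using
    (isHermitian_transpose_mul_self (Vmat N)).mul_dotProduct_self_le hlam.2 x

theorem mul_sum_sq_le_sum_sq_fd2_zeroExtend {lam : ℝ}
    (hlam : IsSmallestEigenvalue ((Wmat N)ᵀ * Wmat N) lam) (x : Fin N → ℝ) :
    lam * ∑ j, x j ^ 2 ≤ ∑ k ∈ Icc (1 : ℤ) (N + 2), fd2 (zeroExtend N x) (k - 2) ^ 2 := by
  simpa only [sum_sq_fd2_zeroExtend, dotProduct, ← sq] using
    (isHermitian_transpose_mul_self (Wmat N)).mul_dotProduct_self_le hlam.2 x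

theorem sum_sq_fd_zeroExtend_le (x : Fin N → ℝ) :
    ∑ k ∈ Icc (1 : ℤ) (N + 1), fd (zeroExtend N x) (k - 1) ^ 2 ≤ 4 * ∑ j, x j ^ 2 := by
  simpa only [sum_sq_zeroExtend] using
    sum_sq_fd_le (fun _ hk => zeroExtend_of_notMem (x := x) hk) _

theorem sum_sq_fd2_zeroExtend_le (x : Fin N → ℝ) :
    ∑ k ∈ Icc (1 : ℤ) (N + 2), fd2 (zeroExtend N x) (k - 2) ^ 2 ≤ 16 * ∑ j, x j ^ 2 := by
  simpa only [sum_sq_zeroExtend] using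
    sum_sq_fd2_le (fun _ hk => zeroExtend_of_notMem (x := x) hk) _

end ZeroExtensionBounds

section Energy

variable {N : ℕ} {p q : ℤ → ℝ} {f : ℤ → ℝ → ℝ}

theorem quadratic_part_zeroExtend_ge {lam1 lam2 pmin qmax : ℝ}
    (hlam1 : IsSmallestEigenvalue ((Vmat N)ᵀ * Vmat N) lam1)
    (hlam2 : IsSmallestEigenvalue ((Wmat N)ᵀ * Wmat N) lam2)
    (hpmin : pmin ∈ lowerBounds (p '' Set.Icc (1 : ℤ) (N + 2)))
    (hqmax : qmax ∈ upperBounds (q '' Set.Icc (1 : ℤ) (N + 1))) (x : Fin N → ℝ) :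
    ((if 0 ≤ pmin then lam2 else 16) * pmin - (if qmax < 0 then lam1 else 4) * qmax) / 2
        * ∑ j, x j ^ 2
      ≤ ∑ k ∈ Icc (1 : ℤ) (N + 2), p k / 2 * fd2 (zeroExtend N x) (k - 2) ^ 2
        - ∑ k ∈ Icc (1 : ℤ) (N + 1), q k / 2 * fd (zeroExtend N x) (k - 1) ^ 2 := by
  have hp : pmin / 2 * ∑ k ∈ Icc (1 : ℤ) (N + 2), fd2 (zeroExtend N x) (k - 2) ^ 2
      ≤ ∑ k ∈ Icc (1 : ℤ) (N + 2), p k / 2 * fd2 (zeroExtend N x) (k - 2) ^ 2 := by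
    rw [mul_sum]
    refine sum_le_sum fun k hk => mul_le_mul_of_nonneg_right ?_ (sq_nonneg _)
    linarith [hpmin ⟨k, mem_Icc.1 hk, rfl⟩]
  have hq : ∑ k ∈ Icc (1 : ℤ) (N + 1), q k / 2 * fd (zeroExtend N x) (k - 1) ^ 2
      ≤ qmax / 2 * ∑ k ∈ Icc (1 : ℤ) (N + 1), fd (zeroExtend N x) (k - 1) ^ 2 := by
    rw [mul_sum]
    refine sum_le_sum fun k hk => mul_le_mul_of_nonneg_right ?_ (sq_nonneg _)
    linarith [hqmax ⟨k, mem_Icc.1 hk, rfl⟩]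
  linarith [ite_nonneg_mul_mul_le (t := pmin) (mul_sum_sq_le_sum_sq_fd2_zeroExtend hlam2 x)
      (sum_sq_fd2_zeroExtend_le x),
    mul_le_ite_neg_mul_mul (t := qmax) (mul_sum_sq_le_sum_sq_fd_zeroExtend hlam1 x)
      (sum_sq_fd_zeroExtend_le x)]

theorem J_congr {y z : ℤ → ℝ} (h : ∀ k ∈ Icc (-1 : ℤ) (N + 2), y k = z k) :
    J N p q f y = J N p q f z := by
  have h' : ∀ k : ℤ, -1 ≤ k → k ≤ N + 2 → y k = z k := fun k h₁ h₂ =>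
    h k (mem_Icc.2 ⟨h₁, h₂⟩)
  unfold _root_.J
  refine congrArg₂ (· + ·) (congrArg₂ (· - ·) ?_ ?_) ?_ <;> apply sum_congr rfl <;>
    intro k hk <;> rw [mem_Icc] at hk <;> simp (disch := omega) only [fd2, fd, h']

theorem J_coercive {m lam1 lam2 pmin qmax : ℝ}
    (hf : ∀ k ∈ Icc (1 : ℤ) N, Continuous (f k))
    (hsign : ∀ k ∈ Icc (1 : ℤ) N, ∀ s : ℝ, m ≤ |s| → 0 ≤ s * f k s)
    (hlam1 : IsSmallestEigenvalue ((Vmat N)ᵀ * Vmat N) lam1)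
    (hlam2 : IsSmallestEigenvalue ((Wmat N)ᵀ * Wmat N) lam2)
    (hpmin : pmin ∈ lowerBounds (p '' Set.Icc (1 : ℤ) (N + 2)))
    (hqmax : qmax ∈ upperBounds (q '' Set.Icc (1 : ℤ) (N + 1)))
    (hcond : 0 < (if 0 ≤ pmin then lam2 else 16) * pmin
        - (if qmax < 0 then lam1 else 4) * qmax) :
    ∀ C : ℝ, ∃ R : ℝ, ∀ y : ℤ → ℝ, bc N y →
      R ≤ ∑ k ∈ Icc (1 : ℤ) N, y k ^ 2 → C ≤ J N p q f y := by
  obtain ⟨C₀, hC₀⟩ := exists_le_sum_Fint hf hsign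
  intro C
  refine ⟨2 * (C - C₀) / ((if 0 ≤ pmin then lam2 else 16) * pmin
    - (if qmax < 0 then lam1 else 4) * qmax), fun y hy hR => ?_⟩
  set x := interiorValues N y
  have hJ : J N p q f y = J N p q f (zeroExtend N x) :=
    J_congr fun k hk => (zeroExtend_interiorValues hy hk).symm
  have hx : ∑ k ∈ Icc (1 : ℤ) N, y k ^ 2 = ∑ j, x j ^ 2 := sum_Icc_one_eq_sum_fin N _
  rw [hx, div_le_iff₀ hcond] at hR
  rw [hJ, _root_.J]
  linarith [quadratic_part_zeroExtend_ge hlam1 hlam2 hpmin hqmax x, hC₀ (zeroExtend N x)]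

end Energy

section Minimizer

variable {N : ℕ} {p q : ℤ → ℝ} {f : ℤ → ℝ → ℝ}

theorem hasDerivAt_Fint_s9 {k : ℤ} (hfk : Continuous (f k)) (s : ℝ) :
    HasDerivAt (Fint f k) (f k s) s :=
  (hfk.integral_hasStrictDerivAt 0 s).hasDerivAt

theorem continuous_J_zeroExtend (hf : ∀ k ∈ Icc (1 : ℤ) N, Continuous (f k)) :
    Continuous fun x : EuclideanSpace ℝ (Fin N) => J N p q f (zeroExtend N x) := by
  have hF : ∀ k ∈ Icc (1 : ℤ) N, Continuous (Fint f k) := fun k hk =>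
    continuous_iff_continuousAt.2 fun s => (hasDerivAt_Fint_s9 (hf k hk) s).continuousAt
  have hze := continuous_zeroExtend_apply (N := N)
  unfold _root_.J fd2 fd
  refine .add (.sub ?_ ?_) (continuous_finsetSum _ fun k hk => (hF k hk).comp (hze k)) <;>
    fun_prop

theorem exists_isMinOn_J (hf : ∀ k ∈ Icc (1 : ℤ) N, Continuous (f k))
    (hcoercive : ∀ C : ℝ, ∃ R : ℝ, ∀ y : ℤ → ℝ, bc N y →
      R ≤ ∑ k ∈ Icc (1 : ℤ) N, y k ^ 2 → C ≤ J N p q f y) :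
    ∃ y₀, bc N y₀ ∧ IsMinOn (J N p q f) {y | bc N y} y₀ := by
  obtain ⟨R, hR⟩ := hcoercive (J N p q f (zeroExtend N 0))
  have hnorm : Tendsto (fun x : EuclideanSpace ℝ (Fin N) => ‖x‖ ^ 2)
      (cocompact _) atTop :=
    (tendsto_pow_atTop two_ne_zero).comp tendsto_norm_cocompact_atTop
  obtain ⟨x₀, hx₀⟩ := (continuous_J_zeroExtend hf).exists_forall_le' 0 <|
    (hnorm.eventually_ge_atTop R).mono fun x hx =>
      hR _ (bc_zeroExtend x) (by rwa [sum_sq_zeroExtend, ← EuclideanSpace.real_norm_sq_eq])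
  refine ⟨zeroExtend N x₀, bc_zeroExtend x₀, isMinOn_iff.2 fun y hy => ?_⟩
  rw [J_congr fun k hk => (zeroExtend_interiorValues hy hk).symm]
  exact hx₀ (WithLp.toLp 2 (interiorValues N y))

end Minimizer

section EulerLagrange

variable {N : ℕ} {p q : ℤ → ℝ} {f : ℤ → ℝ → ℝ}

theorem hasDerivAt_J_add_smul (hf : ∀ k ∈ Icc (1 : ℤ) N, Continuous (f k)) (y δ : ℤ → ℝ) :
    HasDerivAt (fun t : ℝ => J N p q f (y + t • δ))
      (∑ k ∈ Icc (1 : ℤ) (N + 2), p k * fd2 y (k - 2) * fd2 δ (k - 2)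
        - ∑ k ∈ Icc (1 : ℤ) (N + 1), q k * fd y (k - 1) * fd δ (k - 1)
        + ∑ k ∈ Icc (1 : ℤ) N, f k (y k) * δ k) 0 := by
  have hline : ∀ a b : ℝ, HasDerivAt (fun t : ℝ => a + t * b) b 0 := fun a b => by
    simpa using ((hasDerivAt_id (0 : ℝ)).mul_const b).const_add a
  have hsq : ∀ c a b : ℝ, HasDerivAt (fun t : ℝ => c / 2 * (a + t * b) ^ 2) (c * a * b) 0 :=
    fun c a b => (((hline a b).fun_pow 2).const_mul (c / 2)).congr_deriv (by ring)
  have hfd2 : ∀ k (t : ℝ), fd2 (y + t • δ) k = fd2 y k + t * fd2 δ k := fun k t => by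
    simp only [fd2, Pi.add_apply, Pi.smul_apply, smul_eq_mul]; ring
  have hfd : ∀ k (t : ℝ), fd (y + t • δ) k = fd y k + t * fd δ k := fun k t => by
    simp only [fd, Pi.add_apply, Pi.smul_apply, smul_eq_mul]; ring
  unfold _root_.J
  simp only [hfd2, hfd, Pi.add_apply, Pi.smul_apply, smul_eq_mul]
  refine ((HasDerivAt.fun_sum fun k _ => hsq _ _ _).sub
    (HasDerivAt.fun_sum fun k _ => hsq _ _ _)).add (HasDerivAt.fun_sum fun k hk => ?_)
  have := (hasDerivAt_Fint_s9 (hf k hk) (y k + 0 * δ k)).comp (0 : ℝ) (hline (y k) (δ k))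
  rw [zero_mul, add_zero] at this
  exact this

theorem sum_mul_single_sub (u : ℤ → ℝ) {S : Finset ℤ} {j c : ℤ} (h : j + c ∈ S) :
    ∑ k ∈ S, u k * (Pi.single j 1 : ℤ → ℝ) (k - c) = u (j + c) := by
  rw [sum_eq_single (j + c) (fun k _ hk => by rw [Pi.single_eq_of_ne (by omega), mul_zero])
    fun h' => absurd h h', add_sub_cancel_right, Pi.single_eq_same, mul_one]

variable {j : ℤ}

theorem sum_mul_fd2_single (hj : j ∈ Icc (1 : ℤ) N) (u : ℤ → ℝ) :
    ∑ k ∈ Icc (1 : ℤ) (N + 2), u k * fd2 (Pi.single j 1) (k - 2) = fd2 u j := by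
  rw [mem_Icc] at hj
  have hδ : ∀ k, fd2 (Pi.single j 1) (k - 2) = (Pi.single j 1 : ℤ → ℝ) (k - 0)
      - 2 * (Pi.single j 1 : ℤ → ℝ) (k - 1) + (Pi.single j 1 : ℤ → ℝ) (k - 2) := fun k => by
    rw [fd2, show k - 2 + 2 = k - 0 by ring, show k - 2 + 1 = k - 1 by ring]
  simp only [hδ, mul_add, mul_sub, mul_left_comm _ (2 : ℝ), sum_add_distrib, sum_sub_distrib,
    ← mul_sum]
  rw [sum_mul_single_sub u (by rw [mem_Icc]; omega), sum_mul_single_sub u (by rw [mem_Icc]; omega),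
    sum_mul_single_sub u (by rw [mem_Icc]; omega), fd2, add_zero]
  ring

theorem sum_mul_fd_single (hj : j ∈ Icc (1 : ℤ) N) (u : ℤ → ℝ) :
    ∑ k ∈ Icc (1 : ℤ) (N + 1), u k * fd (Pi.single j 1) (k - 1) = -fd u j := by
  rw [mem_Icc] at hj
  have hδ : ∀ k, fd (Pi.single j 1) (k - 1) = (Pi.single j 1 : ℤ → ℝ) (k - 0)
      - (Pi.single j 1 : ℤ → ℝ) (k - 1) := fun k => by
    rw [fd, sub_add_cancel, sub_zero]
  simp only [hδ, mul_sub, sum_sub_distrib]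
  rw [sum_mul_single_sub u (by rw [mem_Icc]; omega), sum_mul_single_sub u (by rw [mem_Icc]; omega),
    fd, add_zero]
  ring

theorem sum_mul_single (hj : j ∈ Icc (1 : ℤ) N) (u : ℤ → ℝ) :
    ∑ k ∈ Icc (1 : ℤ) N, u k * (Pi.single j 1 : ℤ → ℝ) k = u j := by
  simpa using sum_mul_single_sub u (c := 0) (by simpa using hj)

theorem solves_of_isMinOn (hf : ∀ k ∈ Icc (1 : ℤ) N, Continuous (f k)) {y₀ : ℤ → ℝ}
    (hy₀ : bc N y₀) (hmin : IsMinOn (J N p q f) {y | bc N y} y₀) :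
    solves N p q f y₀ := by
  intro j hj
  set δ : ℤ → ℝ := Pi.single j 1
  have hbc : ∀ t : ℝ, bc N (y₀ + t • δ) := fun t => by
    rw [mem_Icc] at hj
    obtain ⟨h₁, h₂, h₃, h₄⟩ := hy₀
    refine ⟨?_, ?_, ?_, ?_⟩ <;>
      simp only [Pi.add_apply, Pi.smul_apply, δ, Pi.single_apply, h₁, h₂, h₃, h₄] <;>
      rw [if_neg (by omega)] <;> simp
  have hloc : IsLocalMin (fun t : ℝ => J N p q f (y₀ + t • δ)) 0 :=
    Eventually.of_forall fun t => by simpa using isMinOn_iff.1 hmin _ (hbc t)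
  have hD := hloc.hasDerivAt_eq_zero (hasDerivAt_J_add_smul hf y₀ δ)
  rw [sum_mul_fd2_single hj, sum_mul_fd_single hj, sum_mul_single hj] at hD
  linarith

end EulerLagrange

theorem stmt_9_general (N : ℕ) (p q : ℤ → ℝ) (f : ℤ → ℝ → ℝ)
    (hf : ∀ k ∈ Finset.Icc (1 : ℤ) (N : ℤ), Continuous (f k))
    (m : ℝ)
    (hsign : ∀ k ∈ Finset.Icc (1 : ℤ) (N : ℤ), ∀ s : ℝ, m ≤ |s| → 0 ≤ s * f k s)
    (lam1 lam2 : ℝ)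
    (hlam1 : IsSmallestEigenvalue ((Vmat N)ᵀ * Vmat N) lam1)
    (hlam2 : IsSmallestEigenvalue ((Wmat N)ᵀ * Wmat N) lam2)
    (pmin qmax : ℝ)
    (hpmin : IsLeast (p '' Set.Icc (1 : ℤ) ((N : ℤ) + 2)) pmin)
    (hqmax : IsGreatest (q '' Set.Icc (1 : ℤ) ((N : ℤ) + 1)) qmax)
    (hcond : 0 < (if 0 ≤ pmin then lam2 else 16) * pmin
        - (if qmax < 0 then lam1 else 4) * qmax) :
    (∀ C : ℝ, ∃ R : ℝ, ∀ y : ℤ → ℝ, bc N y →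
        R ≤ ∑ k ∈ Finset.Icc (1 : ℤ) (N : ℤ), (y k) ^ 2 → C ≤ J N p q f y)
      ∧ ∃ y : ℤ → ℝ, bc N y ∧ solves N p q f y := by
  have hcoercive := J_coercive hf hsign hlam1 hlam2 hpmin.2 hqmax.2 hcond
  obtain ⟨y₀, hy₀, hmin⟩ := exists_isMinOn_J hf hcoercive
  exact ⟨hcoercive, y₀, hy₀, solves_of_isMinOn hf hy₀ hmin⟩

/-- If `s·f(k,s) ≥ 0` for `|s| ≥ m` and `η'(p)·p_min − η(q)·q_max > 0`, then `J`
is coercive on `E` and the BVP has at least one solution. -/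
theorem stmt_9 (N : ℕ) (hN : 1 ≤ N) (p q : ℤ → ℝ) (f : ℤ → ℝ → ℝ)
    (hf : ∀ k ∈ Finset.Icc (1 : ℤ) (N : ℤ), Continuous (f k))
    (m : ℝ) (hm : 0 < m)
    (hsign : ∀ k ∈ Finset.Icc (1 : ℤ) (N : ℤ), ∀ s : ℝ, m ≤ |s| → 0 ≤ s * f k s)
    (lam1 lam2 : ℝ)
    (hlam1 : IsSmallestEigenvalue ((Vmat N)ᵀ * Vmat N) lam1)
    (hlam2 : IsSmallestEigenvalue ((Wmat N)ᵀ * Wmat N) lam2)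
    (pmin qmax : ℝ)
    (hpmin : IsLeast (p '' Set.Icc (1 : ℤ) ((N : ℤ) + 2)) pmin)
    (hqmax : IsGreatest (q '' Set.Icc (1 : ℤ) ((N : ℤ) + 1)) qmax)
    (hcond : 0 < (if 0 ≤ pmin then lam2 else 16) * pmin
        - (if qmax < 0 then lam1 else 4) * qmax) :
    (∀ C : ℝ, ∃ R : ℝ, ∀ y : ℤ → ℝ, bc N y →
        R ≤ ∑ k ∈ Finset.Icc (1 : ℤ) (N : ℤ), (y k) ^ 2 → C ≤ J N p q f y)
      ∧ ∃ y : ℤ → ℝ, bc N y ∧ solves N p q f y :=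
  stmt_9_general N p q f hf m hsign lam1 lam2 hlam1 hlam2 pmin qmax hpmin hqmax hcond
end
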